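/- The Mathieu group M11 contains a subgroup isomorphic to the quaternion group Q8 and a subgroup isomorphic to the dihedral group D4 of order 8. -/
import Mathlib

set_option maxRecDepth 10000
open Equiv

/-- The 11-cycle (1,2,3,4,5,6,7,8,9,10,11) (0-indexed on `Fin 11`). -/
def m11a : Equiv.Perm (Fin 11) := c[0, 1, 2, 3, 4, 5, 6, 7, 8, 9, 10]

/-- The permutation (3,7,11,8)(4,10,5,6) (0-indexed on `Fin 11`). -/
def m11b : Equiv.Perm (Fin 11) := c[2, 6, 10, 7] * c[3, 9, 4, 5]

/-- The Mathieu group `M₁₁` as a subgroup of `S₁₁`. -/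
def M11 : Subgroup (Equiv.Perm (Fin 11)) := Subgroup.closure {m11a, m11b}

def PX : Equiv.Perm (Fin 11) := m11b
def PY : Equiv.Perm (Fin 11) := c[(2:Fin 11), 4, 10, 3] * c[(5:Fin 11), 6, 9, 7]
def PS : Equiv.Perm (Fin 11) := c[(0:Fin 11), 1] * c[(2:Fin 11), 6] * c[(3:Fin 11), 4] * c[(7:Fin 11), 10]

lemma ha : m11a ∈ M11 := Subgroup.subset_closure (Or.inl rfl)
lemma hb : m11b ∈ M11 := Subgroup.subset_closure (Or.inr rfl)

lemma hX : PX ∈ M11 := hb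

lemma hY : PY ∈ M11 := by
  have h : PY = m11a*m11b*m11b*m11a*m11b*m11a*m11a*m11b*m11b*m11a*m11a := by decide
  rw [h]
  exact mul_mem (mul_mem (mul_mem (mul_mem (mul_mem (mul_mem (mul_mem (mul_mem
    (mul_mem (mul_mem ha hb) hb) ha) hb) ha) ha) hb) hb) ha) ha

lemma hS : PS ∈ M11 := by
  have h : PS = m11a^8 * m11b^2 * m11a^3 := by decide
  rw [h]
  exact mul_mem (mul_mem (pow_mem ha 8) (pow_mem hb 2)) (pow_mem ha 3)

def qf : QuaternionGroup 2 → Equiv.Perm (Fin 11)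
  | .a i => PX ^ i.val
  | .xa i => PY * PX ^ i.val

lemma qf_mul : ∀ g h, qf (g * h) = qf g * qf h := by decide

lemma qf_inj : Function.Injective qf := by decide

def df : DihedralGroup 4 → Equiv.Perm (Fin 11)
  | .r i => PX ^ i.val
  | .sr i => PS * PX ^ i.val

lemma df_mul : ∀ g h, df (g * h) = df g * df h := by decide

lemma df_inj : Function.Injective df := by decide

lemma qf_mem : ∀ g, qf g ∈ M11 := by
  rintro (i | i)
  · exact pow_mem hX _
  · exact mul_mem hY (pow_mem hX _)

lemma df_mem : ∀ g, df g ∈ M11 := by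
  rintro (i | i)
  · exact pow_mem hX _
  · exact mul_mem hS (pow_mem hX _)

/-- M11 contains a subgroup isomorphic to the quaternion group Q8 and a subgroup
isomorphic to the dihedral group of order 8. -/
theorem M11_contains_Q8_and_D4 :
    (∃ K : Subgroup M11, Nonempty (K ≃* QuaternionGroup 2)) ∧
    (∃ K : Subgroup M11, Nonempty (K ≃* DihedralGroup 4)) := by
  constructor
  · let ψ : QuaternionGroup 2 →* Equiv.Perm (Fin 11) := MonoidHom.mk' qf qf_mul
    let φ : QuaternionGroup 2 →* M11 := ψ.codRestrict M11 qf_mem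
    have hφ : Function.Injective φ := fun x y h => qf_inj (congrArg Subtype.val h)
    exact ⟨φ.range, ⟨(MonoidHom.ofInjective hφ).symm⟩⟩
  · let ψ : DihedralGroup 4 →* Equiv.Perm (Fin 11) := MonoidHom.mk' df df_mul
    let φ : DihedralGroup 4 →* M11 := ψ.codRestrict M11 df_mem
    have hφ : Function.Injective φ := fun x y h => df_inj (congrArg Subtype.val h)
    exact ⟨φ.range, ⟨(MonoidHom.ofInjective hφ).symm⟩⟩
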